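/- arXiv:1709.08585 — 2 statements merged into one kernel-verified Lean document; each statement's English description precedes it below -/
import Mathlib

section
/- Let Z^d ⊆ H ⊆ Q^d. The translation action of Z^d on the Pontryagin dual Y_H of H/Z^d (where n ∈ Z^d acts by multiplying a character x by the character h + Z^d ↦ exp(2πi⟨h,n⟩)) is free if and only if H is dense in Q^d (equivalently dense in R^d). -/
/-- The integer lattice `ℤᵈ` inside `ℚᵈ`. -/
def zLattice (d : ℕ) : AddSubgroup (Fin d → ℚ) :=
  AddSubgroup.pi Set.univ (fun _ => (Int.castAddHom ℚ).range)

/-- The pairing `v ↦ ⟨v, n⟩` from `ℚᵈ` to `ℝ`, for `n ∈ ℤᵈ`. -/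
noncomputable def pairHom (d : ℕ) (n : Fin d → ℤ) : (Fin d → ℚ) →+ ℝ where
  toFun v := ∑ i, (v i : ℝ) * n i
  map_zero' := by simp
  map_add' a b := by
    show (∑ i, (((a + b) i : ℚ) : ℝ) * n i) = _
    rw [← Finset.sum_add_distrib]
    congr 1; funext i
    push_cast [Pi.add_apply]
    ring

/-- The dual `ρ̂ : ℤᵈ → Y_H` of the inclusion `H/ℤᵈ → ℝᵈ/ℤᵈ`: the element
`n ∈ ℤᵈ` is sent to the character `h + ℤᵈ ↦ ⟨h,n⟩ mod 1` of `H/ℤᵈ`. -/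
noncomputable def rhoHat (d : ℕ) (H : AddSubgroup (Fin d → ℚ)) (n : Fin d → ℤ) :
    (H ⧸ (zLattice d).addSubgroupOf H) →+ AddCircle (1 : ℝ) :=
  QuotientAddGroup.lift ((zLattice d).addSubgroupOf H)
    (((QuotientAddGroup.mk' (AddSubgroup.zmultiples (1 : ℝ))).comp (pairHom d n)).comp
      H.subtype)
    (by
      rintro ⟨v, hvH⟩ hv
      have hv' : v ∈ zLattice d := hv
      choose w hw using fun i => hv' i (Set.mem_univ i)
      simp only [AddMonoidHom.mem_ker, AddMonoidHom.comp_apply,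
        QuotientAddGroup.mk'_apply, QuotientAddGroup.eq_zero_iff]
      refine ⟨∑ i, w i * n i, ?_⟩
      push_cast
      simp only [zsmul_eq_mul, mul_one, pairHom, AddMonoidHom.coe_mk, ZeroHom.coe_mk]
      rw [Int.cast_sum]
      refine Finset.sum_congr rfl fun i _ => ?_
      have : (v i : ℝ) = ((w i : ℤ) : ℝ) := by
        rw [← hw i]; simp [Int.castAddHom]
      simp only [AddSubgroup.coe_subtype, this]
      push_cast
      ring)

/-! `ρ̂(n) = 0` exactly when `⟨h, n⟩ ∈ ℤ` for all `h ∈ H`, i.e. when the character `mFourier n` of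
the torus `ℝᵈ/ℤᵈ` is trivial on the image `S` of `H`; so freeness says that no nontrivial character
is trivial on `S`. Because `ℤᵈ ≤ H`, the group `H` is the full preimage of `S`, so `H` is dense in
`ℚᵈ` iff `S` is dense in the torus. Finally, if no nontrivial character is trivial on `S`, then
the pushforward of the Haar probability measure of the closure of `S` has the same Fourier
coefficients as the Haar measure of the torus; the two measures therefore coincide, and the
closure of `S` has full measure, so it is the whole torus. -/

open MeasureTheory TopologicalSpace UnitAddTorus

section Integration

variable {X E : Type*} [TopologicalSpace X] [CompactSpace X] [MeasurableSpace X] [BorelSpace X]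
  [NormedAddCommGroup E]

theorem ContinuousMap.integrable (g : C(X, E)) (μ : Measure X) [IsFiniteMeasure μ] :
    Integrable g μ :=
  g.continuous.integrable_of_hasCompactSupport (.of_compactSpace _)

theorem ContinuousMap.continuous_integral [NormedSpace ℝ E] [SecondCountableTopologyEither X E]
    (μ : Measure X) [IsFiniteMeasure μ] : Continuous fun g : C(X, E) => ∫ x, g x ∂μ :=
  (MeasureTheory.continuous_integral.comp (toLp 1 μ ℝ).continuous).congr fun g =>
    integral_congr_ae (coeFn_toLp μ g)

end Integration

instance {K : Type*} [AddGroup K] [TopologicalSpace K] [IsTopologicalAddGroup K] [CompactSpace K]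
    [MeasurableSpace K] [BorelSpace K] :
    IsProbabilityMeasure (Measure.addHaarMeasure (⊤ : PositiveCompacts K)) :=
  ⟨by simpa using Measure.addHaarMeasure_self (K₀ := (⊤ : PositiveCompacts K))⟩

theorem integral_eq_zero_of_add_left_eq_mul {G : Type*} [AddGroup G] [MeasurableSpace G]
    [MeasurableAdd G] (μ : Measure G) [μ.IsAddLeftInvariant] {f : G → ℂ} {s : G} {c : ℂ}
    (hc : c ≠ 1) (hf : ∀ x, f (s + x) = c * f x) : ∫ x, f x ∂μ = 0 := by
  have h : c * ∫ x, f x ∂μ = ∫ x, f x ∂μ := by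
    rw [← integral_const_mul, ← integral_add_left_eq_self f s]
    simp only [hf]
  have h' : (c - 1) * ∫ x, f x ∂μ = 0 := by rw [sub_mul, h, one_mul, sub_self]
  exact (mul_eq_zero.mp h').resolve_left (sub_ne_zero.mpr hc)

theorem fourier_one_eq_one_iff {T : ℝ} (hT : T ≠ 0) {x : AddCircle T} :
    fourier 1 x = 1 ↔ x = 0 := by
  rw [fourier_one, Circle.coe_eq_one, ← AddCircle.toCircle_zero,
    (AddCircle.injective_toCircle hT).eq_iff]

namespace UnitAddTorus

variable {d : Type*} [Fintype d]

theorem mFourier_injective : Function.Injective (mFourier (d := d)) := fun m n h =>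
  orthonormal_mFourier.linearIndependent.injective <| by simp only [mFourierLp, h]

theorem exists_mFourier_ne_one {n : d → ℤ} (hn : n ≠ 0) : ∃ x, mFourier n x ≠ 1 := by
  by_contra! h
  exact hn (mFourier_injective (by ext x; simp [h x, mFourier_zero]))

theorem mFourier_apply_add (n : d → ℤ) (x y : UnitAddTorus d) :
    mFourier n (x + y) = mFourier n x * mFourier n y := by
  simp only [mFourier, ContinuousMap.coe_mk, Pi.add_apply, fourier_apply, smul_add,
    AddCircle.toCircle_add, Circle.coe_mul, Finset.prod_mul_distrib]

theorem integral_eq_of_integral_mFourier_eq {μ ν : Measure (UnitAddTorus d)} [IsFiniteMeasure μ]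
    [IsFiniteMeasure ν] (h : ∀ n, ∫ x, mFourier n x ∂μ = ∫ x, mFourier n x ∂ν)
    (g : C(UnitAddTorus d, ℂ)) : ∫ x, g x ∂μ = ∫ x, g x ∂ν := by
  have hspan : ∀ g ∈ Submodule.span ℂ (Set.range (mFourier (d := d))),
      ∫ x, g x ∂μ = ∫ x, g x ∂ν := by
    intro g hg
    induction hg using Submodule.span_induction with
    | mem g hg => obtain ⟨n, rfl⟩ := hg; exact h n
    | zero => simp
    | add f g _ _ hf hg =>
      simp only [ContinuousMap.add_apply]
      rw [integral_add (f.integrable μ) (g.integrable μ),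
        integral_add (f.integrable ν) (g.integrable ν), hf, hg]
    | smul c g _ hg => simp only [ContinuousMap.smul_apply, integral_smul, hg]
  have hclosed : IsClosed {g : C(UnitAddTorus d, ℂ) | ∫ x, g x ∂μ = ∫ x, g x ∂ν} :=
    isClosed_eq (ContinuousMap.continuous_integral μ) (ContinuousMap.continuous_integral ν)
  have hg : g ∈ closure (Submodule.span ℂ (Set.range (mFourier (d := d))) : Set _) := by
    rw [← Submodule.topologicalClosure_coe, span_mFourier_closure_eq_top]; trivial
  exact closure_minimal hspan hclosed hg

theorem measure_ext_of_integral_mFourier_eq {μ ν : Measure (UnitAddTorus d)} [IsFiniteMeasure μ]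
    [IsFiniteMeasure ν] (h : ∀ n, ∫ x, mFourier n x ∂μ = ∫ x, mFourier n x ∂ν) : μ = ν := by
  refine ext_of_forall_integral_eq_of_IsFiniteMeasure fun f => Complex.ofReal_injective ?_
  rw [← integral_complex_ofReal, ← integral_complex_ofReal]
  exact integral_eq_of_integral_mFourier_eq h ⟨fun x => (f x : ℂ), by fun_prop⟩

theorem integral_mFourier_map_addHaarMeasure {K : Type*} [AddGroup K] [TopologicalSpace K]
    [IsTopologicalAddGroup K] [CompactSpace K] [MeasurableSpace K] [BorelSpace K]
    {φ : K →+ UnitAddTorus d} (hφ : Continuous φ) (hK : ∀ n ≠ 0, ∃ k, mFourier n (φ k) ≠ 1)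
    (n : d → ℤ) :
    ∫ x, mFourier n x ∂(Measure.addHaarMeasure ⊤).map φ = if n = 0 then 1 else 0 := by
  rw [integral_map hφ.aemeasurable (mFourier n).continuous.aestronglyMeasurable]
  split_ifs with hn
  · simp [hn, mFourier_zero]
  · obtain ⟨k, hk⟩ := hK n hn
    exact integral_eq_zero_of_add_left_eq_mul _ hk fun x => by rw [map_add, mFourier_apply_add]

theorem dense_of_forall_exists_mFourier_ne_one {S : AddSubgroup (UnitAddTorus d)}
    (hS : ∀ n ≠ 0, ∃ s ∈ S, mFourier n s ≠ 1) : Dense (S : Set (UnitAddTorus d)) := by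
  set G := S.topologicalClosure
  have : CompactSpace G := isCompact_iff_compactSpace.mp S.isClosed_topologicalClosure.isCompact
  have hG : (Measure.addHaarMeasure ⊤ : Measure G).map ((↑) : G → UnitAddTorus d) =
      Measure.addHaarMeasure ⊤ := by
    have hGS : ∀ n ≠ 0, ∃ k : G, mFourier n (G.subtype k) ≠ 1 := fun n hn => by
      obtain ⟨s, hs, hs1⟩ := hS n hn
      exact ⟨⟨s, S.le_topologicalClosure hs⟩, hs1⟩
    have hid : ∀ n ≠ 0, ∃ x, mFourier n (AddMonoidHom.id (UnitAddTorus d) x) ≠ 1 :=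
      fun _ => exists_mFourier_ne_one
    simpa using measure_ext_of_integral_mFourier_eq fun n =>
      (integral_mFourier_map_addHaarMeasure continuous_subtype_val hGS n).trans
        (integral_mFourier_map_addHaarMeasure continuous_id hid n).symm
  by_contra hdense
  have hopen : IsOpen (G : Set (UnitAddTorus d))ᶜ := S.isClosed_topologicalClosure.isOpen_compl
  have hne : (G : Set (UnitAddTorus d))ᶜ.Nonempty := by
    rwa [Set.nonempty_compl, S.topologicalClosure_coe, Ne, ← dense_iff_closure_eq]
  have hpos := hopen.measure_pos (Measure.addHaarMeasure ⊤) hne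
  rw [← hG, Measure.map_apply continuous_subtype_val.measurable hopen.measurableSet,
    Set.preimage_compl, Subtype.coe_preimage_self, Set.compl_univ, measure_empty] at hpos
  exact hpos.false

theorem dense_iff_forall_mFourier_eq_one_imp_eq_zero (S : AddSubgroup (UnitAddTorus d)) :
    Dense (S : Set (UnitAddTorus d)) ↔ ∀ n, (∀ s ∈ S, mFourier n s = 1) → n = 0 := by
  refine ⟨fun hS n hn => mFourier_injective ?_,
    fun h => dense_of_forall_exists_mFourier_ne_one fun n hn => ?_⟩
  · rw [mFourier_zero]
    exact ContinuousMap.ext <| congrFun <|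
      Continuous.ext_on hS (mFourier n).continuous continuous_const hn
  · by_contra! h'
    exact hn (h n h')

end UnitAddTorus

noncomputable def ratToReal (d : ℕ) : (Fin d → ℚ) →+ (Fin d → ℝ) :=
  (Rat.castHom ℝ).toAddMonoidHom.compLeft (Fin d)

def realToTorus (d : ℕ) : (Fin d → ℝ) →+ UnitAddTorus (Fin d) :=
  (QuotientAddGroup.mk' (AddSubgroup.zmultiples (1 : ℝ))).compLeft (Fin d)

noncomputable def ratToTorus (d : ℕ) : (Fin d → ℚ) →+ UnitAddTorus (Fin d) :=
  (realToTorus d).comp (ratToReal d)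

theorem isDenseInducing_ratToReal (d : ℕ) : IsDenseInducing (ratToReal d) :=
  ⟨.piMap fun _ => Rat.isDenseEmbedding_coe_real.isInducing, .piMap fun _ => Rat.denseRange_cast⟩

theorem isOpenQuotientMap_realToTorus (d : ℕ) : IsOpenQuotientMap (realToTorus d) :=
  .piMap fun _ => QuotientAddGroup.isOpenQuotientMap_mk

theorem ker_realToTorus_le (d : ℕ) : (realToTorus d).ker ≤ (zLattice d).map (ratToReal d) := by
  intro x hx
  have hx' : ∀ i, ∃ k : ℤ, (k : ℝ) = x i := fun i => by
    obtain ⟨k, hk⟩ := (QuotientAddGroup.eq_zero_iff (x i)).mp (congrFun hx i)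
    exact ⟨k, by simpa using hk⟩
  choose k hk using hx'
  exact ⟨fun i => k i, fun i _ => ⟨k i, rfl⟩, funext fun i => by simp [ratToReal, hk]⟩

theorem dense_iff_dense_map_ratToTorus {d : ℕ} {H : AddSubgroup (Fin d → ℚ)}
    (hZ : zLattice d ≤ H) :
    Dense (H : Set (Fin d → ℚ)) ↔ Dense (H.map (ratToTorus d) : Set (UnitAddTorus (Fin d))) := by
  have hker : (realToTorus d).ker ≤ H.map (ratToReal d) :=
    (ker_realToTorus_le d).trans (AddSubgroup.map_mono hZ)
  rw [← (isDenseInducing_ratToReal d).dense_image,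
    ← (isOpenQuotientMap_realToTorus d).dense_preimage_iff, ratToTorus, ← AddSubgroup.map_map,
    ← AddSubgroup.coe_map, ← AddSubgroup.coe_comap, AddSubgroup.comap_map_eq,
    sup_eq_left.mpr hker]

theorem mFourier_ratToTorus {d : ℕ} (n : Fin d → ℤ) (v : Fin d → ℚ) :
    mFourier n (ratToTorus d v) = fourier 1 (pairHom d n v : AddCircle (1 : ℝ)) := by
  change ∏ i, fourier (n i) ((v i : ℝ) : AddCircle (1 : ℝ)) = _
  simp only [fourier_coe_apply, ← Complex.exp_sum, pairHom, AddMonoidHom.coe_mk, ZeroHom.coe_mk]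
  push_cast
  rw [Finset.mul_sum, Finset.sum_div]
  exact congrArg Complex.exp (Finset.sum_congr rfl fun i _ => by ring)

@[simp]
theorem rhoHat_mk {d : ℕ} {H : AddSubgroup (Fin d → ℚ)} (n : Fin d → ℤ) (v : H) :
    rhoHat d H n v = (pairHom d n v : AddCircle (1 : ℝ)) :=
  rfl

theorem rhoHat_eq_zero_iff {d : ℕ} {H : AddSubgroup (Fin d → ℚ)} {n : Fin d → ℤ} :
    rhoHat d H n = 0 ↔ ∀ v ∈ H, (pairHom d n v : AddCircle (1 : ℝ)) = 0 := by
  refine ⟨fun h v hv => by simpa using DFunLike.congr_fun h (QuotientAddGroup.mk ⟨v, hv⟩),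
    fun h => ?_⟩
  ext v
  exact h v v.2

/-- The translation action `ψ_H` of `ℤᵈ` on the Pontryagin dual `Y_H` of `H/ℤᵈ`
(where `n` acts by `x ↦ x + ρ̂(n)`) is free if and only if `H` is dense in `ℚᵈ`. -/
theorem odometer_free_iff_dense (d : ℕ) (H : AddSubgroup (Fin d → ℚ))
    (hZ : zLattice d ≤ H) :
    (∀ n : Fin d → ℤ,
        (∃ x : (H ⧸ (zLattice d).addSubgroupOf H) →+ AddCircle (1 : ℝ),
          x + rhoHat d H n = x) → n = 0) ↔
      Dense (H : Set (Fin d → ℚ)) := by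
  rw [dense_iff_dense_map_ratToTorus hZ, dense_iff_forall_mFourier_eq_one_imp_eq_zero]
  refine forall_congr' fun n => imp_congr_left ?_
  simp only [add_eq_left, exists_const, rhoHat_eq_zero_iff, AddSubgroup.mem_map,
    forall_exists_index, and_imp, forall_apply_eq_imp_iff₂, mFourier_ratToTorus,
    fourier_one_eq_one_iff one_ne_zero]
end

section
/- Let (X, φ) be a minimal action of Z^d by homeomorphisms on a compact space X. Then the first cohomology group H^1(X, φ) (continuous Z-valued cocycles modulo coboundaries) is torsion-free. -/
variable (d : ℕ) (X : Type*) [TopologicalSpace X] [AddAction (Fin d → ℤ) X]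

/-- Continuous cocycles for a `ℤᵈ`-action `(X, φ)`: continuous
`θ : X × ℤᵈ → ℤ` with `θ(x, m+n) = θ(x,m) + θ(φᵐ(x), n)`. -/
def Cocycles : AddSubgroup ((X × (Fin d → ℤ)) → ℤ) where
  carrier := {θ | (∀ n : Fin d → ℤ, Continuous fun x : X => θ (x, n)) ∧
    ∀ (x : X) (m n : Fin d → ℤ), θ (x, m + n) = θ (x, m) + θ (m +ᵥ x, n)}
  zero_mem' := ⟨fun _ => continuous_const, by intro x m n; simp⟩
  add_mem' := by
    rintro a b ⟨hac, ha⟩ ⟨hbc, hb⟩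
    refine ⟨fun n => (hac n).add (hbc n), fun x m n => ?_⟩
    simp only [Pi.add_apply, ha x m n, hb x m n]
    ring
  neg_mem' := by
    rintro a ⟨hac, ha⟩
    refine ⟨fun n => (hac n).neg, fun x m n => ?_⟩
    simp only [Pi.neg_apply, ha x m n]
    ring

/-- Coboundaries: `θ(x,n) = f(φⁿ(x)) − f(x)` for a continuous `f : X → ℤ`. -/
def Coboundaries : AddSubgroup ((X × (Fin d → ℤ)) → ℤ) where
  carrier := {θ | ∃ f : X → ℤ, Continuous f ∧
    ∀ (x : X) (n : Fin d → ℤ), θ (x, n) = f (n +ᵥ x) - f x}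
  zero_mem' := ⟨0, continuous_const, by intro x n; simp⟩
  add_mem' := by
    rintro a b ⟨f, hfc, hf⟩ ⟨g, hgc, hg⟩
    refine ⟨f + g, hfc.add hgc, fun x n => ?_⟩
    simp only [Pi.add_apply, hf x n, hg x n]
    ring
  neg_mem' := by
    rintro a ⟨f, hfc, hf⟩
    refine ⟨-f, hfc.neg, fun x n => ?_⟩
    simp only [Pi.neg_apply, hf x n]
    ring

/-- The first (continuous) cohomology group `H¹(X, φ)`. -/
def H1 := Cocycles d X ⧸ (Coboundaries d X).addSubgroupOf (Cocycles d X)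

noncomputable instance : AddCommGroup (H1 d X) :=
  QuotientAddGroup.Quotient.addCommGroup _

/-!
If `k • θ = df`, then along the dense orbit of a point `x₀` the values of `f` agree with
`f x₀` modulo `k`. Since `f` is continuous into the discrete space `ℤ`, the condition
`k ∣ f y - f x₀` is closed, so it holds everywhere; hence `(f - f x₀) / k` is a continuous
function whose coboundary is `θ`.
-/

section

variable {d X}

theorem exists_continuous_eq_mul_add_of_dense {f : X → ℤ} (hf : Continuous f) {s : Set X}
    (hs : Dense s) {k c : ℤ} (hdvd : ∀ y ∈ s, k ∣ f y - c) :
    ∃ g : X → ℤ, Continuous g ∧ ∀ y, f y = k * g y + c := by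
  have hdvd_all : ∀ y, k ∣ f y - c :=
    hs.induction hdvd ((isClosed_discrete {m : ℤ | k ∣ m - c}).preimage hf)
  refine ⟨fun y => (f y - c) / k,
    (continuous_of_discreteTopology (f := fun m : ℤ => (m - c) / k)).comp hf, fun y => ?_⟩
  rw [Int.mul_ediv_cancel' (hdvd_all y)]
  ring

theorem mem_coboundaries_of_zsmul_mem
    (hmin : ∀ x : X, Dense {y : X | ∃ n : Fin d → ℤ, n +ᵥ x = y})
    {θ : X × (Fin d → ℤ) → ℤ} {k : ℤ} (hk : k ≠ 0)
    (hkθ : k • θ ∈ Coboundaries d X) :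
    θ ∈ Coboundaries d X := by
  obtain ⟨f, hfc, hf⟩ := hkθ
  simp only [Pi.smul_apply, smul_eq_mul] at hf
  rcases isEmpty_or_nonempty X with _ | ⟨⟨x₀⟩⟩
  · exact ⟨0, continuous_const, fun x => isEmptyElim x⟩
  obtain ⟨g, hgc, hfg⟩ := exists_continuous_eq_mul_add_of_dense hfc (hmin x₀)
    (k := k) (c := f x₀) (by rintro _ ⟨n, rfl⟩; exact ⟨θ (x₀, n), (hf x₀ n).symm⟩)
  refine ⟨g, hgc, fun x n => mul_left_cancel₀ hk ?_⟩
  rw [hf, hfg (n +ᵥ x), hfg x]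
  ring

end

theorem h1_torsionFree
    (hmin : ∀ x : X, Dense {y : X | ∃ n : Fin d → ℤ, n +ᵥ x = y}) :
    ∀ (a : H1 d X) (k : ℕ), k ≠ 0 → k • a = 0 → a = 0 := by
  intro a k hk hka
  induction a using QuotientAddGroup.induction_on with | H θ => ?_
  have hkθ : (QuotientAddGroup.mk (k • θ) :
      Cocycles d X ⧸ (Coboundaries d X).addSubgroupOf (Cocycles d X)) = 0 := hka
  rw [QuotientAddGroup.eq_zero_iff, AddSubgroup.mem_addSubgroupOf] at hkθ
  refine (QuotientAddGroup.eq_zero_iff θ).mpr (AddSubgroup.mem_addSubgroupOf.mpr ?_)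
  exact mem_coboundaries_of_zsmul_mem hmin (Int.natCast_ne_zero.mpr hk)
    (by simpa [natCast_zsmul] using hkθ)
end
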